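/- arXiv:1410.4462 — 4 statements merged into one kernel-verified Lean document; each statement's English description precedes it below -/
import Mathlib

section
/- Let M = (M_n)_{n≤0} be a sequence of Markov kernels on a finite set E with backward products M_{n,k} defined by M_{k,k} = Id and M_{n−1,k} = M_n M_{n,k} for n ≤ k. If for some n < k there exists x* ∈ E and ε > 0 with min_{x∈E} M_{n,k}(x, x*) ≥ ε, then under the independent-coupling measure Q (where the random variables ξ_n^x, for x ∈ E and n ≤ 0, are independent with ξ_n^x distributed as M_n(x,·), and Φ_{n,k} denotes the composition Φ_k ∘ ⋯ ∘ Φ_{n+1} of the random maps Φ_m(x) := ξ_m^x), the probability that the image of Φ_{n,k} is a singleton is at least ε^s, where s = card(E). -/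
open scoped BigOperators
open MeasureTheory ProbabilityTheory Filter

/-- Backward products `M_{n,k}`: `M_{k,k} = Id`, `M_{n-1,k} = M_n M_{n,k}`. -/
noncomputable def backProd {E : Type*} [Fintype E] [DecidableEq E] (M : ℤ → E → E → ℝ)
    (n k : ℤ) (x x' : E) : ℝ :=
  if _h : n < k then ∑ z, M (n + 1) x z * backProd M (n + 1) k z x'
  else if x = x' then 1 else 0
termination_by (k - n).toNat
decreasing_by omega

/-- Composed random maps `Φ_{n,k} = Φ_k ∘ ⋯ ∘ Φ_{n+1}`, where `Φ_m(x) = ξ_m^x = ω m x`. -/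
def PhiMap {E : Type*} (ω : ℤ → E → E) (n k : ℤ) (x : E) : E :=
  if _h : n < k then PhiMap ω (n + 1) k (ω (n + 1) x) else x
termination_by (k - n).toNat
decreasing_by omega

/-!
Fix `x*` and follow the chains started in a set `S` from time `n`. Splitting according to the
value `g` of the first map `Φ_{n+1}`, the event that every chain from `S` is at `x*` at time `k`
is the disjoint union over `g` of `{Φ_{n+1} = g}` intersected with the same event for `g(S)` from
time `n + 1`, and the two pieces are independent. As the entries of `M_{n+1,k}` lie in `[0, 1]`,
`∏_{y ∈ g(S)} M_{n+1,k}(y, x*) ≥ ∏_{x ∈ S} M_{n+1,k}(g x, x*)`, and summing over `g` gives by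
induction `Q(Φ_{n,k} = x* on S) ≥ ∏_{x ∈ S} M_{n,k}(x, x*) ≥ ε ^ #S`; take `S = E`.

The σ-algebra on `E` is arbitrary, so `Q {ω | ω j x = y}` is an outer measure. A value `y` whose
singleton is not measurable shares its (measurable) atom `A` with some `y' ≠ y`; every measurable
hull of `{ω j x = y}` or `{ω j x = y'}` contains `{ω j x ∈ A}`, and since the outer masses sum to
one this forces the mass of `y` to vanish.
-/

open scoped ENNReal

section BackwardProduct

variable {E : Type*} [Fintype E] [DecidableEq E]

theorem backProd_of_lt (M : ℤ → E → E → ℝ) {n k : ℤ} (h : n < k) (x x' : E) :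
    backProd M n k x x' = ∑ z, M (n + 1) x z * backProd M (n + 1) k z x' := by
  rw [backProd, dif_pos h]

theorem backProd_of_not_lt (M : ℤ → E → E → ℝ) {n k : ℤ} (h : ¬n < k) (x x' : E) :
    backProd M n k x x' = if x = x' then 1 else 0 := by
  rw [backProd, dif_neg h]

theorem backProd_nonneg {M : ℤ → E → E → ℝ} (hM0 : ∀ n x x', 0 ≤ M n x x')
    (n k : ℤ) (x x' : E) : 0 ≤ backProd M n k x x' := by
  by_cases h : n < k
  · rw [backProd_of_lt M h]
    exact Finset.sum_nonneg fun z _ => mul_nonneg (hM0 _ _ _) (backProd_nonneg hM0 (n + 1) k z x')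
  · rw [backProd_of_not_lt M h]
    split_ifs <;> norm_num
termination_by (k - n).toNat

theorem sum_backProd {M : ℤ → E → E → ℝ} (hM1 : ∀ n x, ∑ x', M n x x' = 1)
    (n k : ℤ) (x : E) : ∑ x', backProd M n k x x' = 1 := by
  by_cases h : n < k
  · simp only [backProd_of_lt M h]
    rw [Finset.sum_comm]
    simp only [← Finset.mul_sum, sum_backProd hM1 (n + 1) k, mul_one, hM1]
  · simp [backProd_of_not_lt M h]
termination_by (k - n).toNat

theorem backProd_le_one {M : ℤ → E → E → ℝ} (hM0 : ∀ n x x', 0 ≤ M n x x')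
    (hM1 : ∀ n x, ∑ x', M n x x' = 1) (n k : ℤ) (x x' : E) : backProd M n k x x' ≤ 1 :=
  sum_backProd hM1 n k x ▸
    Finset.single_le_sum (fun y _ => backProd_nonneg hM0 n k x y) (Finset.mem_univ x')

end BackwardProduct

theorem PhiMap_of_lt {E : Type*} (ω : ℤ → E → E) {n k : ℤ} (h : n < k) (x : E) :
    PhiMap ω n k x = PhiMap ω (n + 1) k (ω (n + 1) x) := by
  rw [PhiMap, dif_pos h]

theorem PhiMap_of_not_lt {E : Type*} (ω : ℤ → E → E) {n k : ℤ} (h : ¬n < k) (x : E) :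
    PhiMap ω n k x = x := by
  rw [PhiMap, dif_neg h]

theorem Finset.prod_comp_le_prod_image {ι κ R : Type*} [DecidableEq κ] [CommSemiring R]
    [PartialOrder R] [IsOrderedRing R] {f : κ → R} (h0 : ∀ y, 0 ≤ f y) (h1 : ∀ y, f y ≤ 1)
    (s : Finset ι) (g : ι → κ) : ∏ x ∈ s, f (g x) ≤ ∏ y ∈ s.image g, f y := by
  rw [Finset.prod_comp]
  refine Finset.prod_le_prod (fun y _ => pow_nonneg (h0 y) _) fun y hy => ?_
  obtain ⟨x, hx, rfl⟩ := Finset.mem_image.mp hy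
  exact pow_le_of_le_one (h0 _) (h1 _)
    (Finset.card_ne_zero.mpr ⟨x, Finset.mem_filter.mpr ⟨hx, rfl⟩⟩)

theorem Finset.prod_sum_mul_eq_sum_piFinset {E R : Type*} [Fintype E] [DecidableEq E]
    [CommSemiring R] {P : E → E → R} (hP1 : ∀ x, ∑ z, P x z = 1) {G : Finset E}
    (hG : ∀ x z, z ∉ G → P x z = 0) (S : Finset E) (f : E → R) :
    ∏ x ∈ S, ∑ z, P x z * f z =
      ∑ g ∈ Fintype.piFinset fun _ => G, (∏ x, P x (g x)) * ∏ x ∈ S, f (g x) := by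
  have hsupp : ∀ x (h : E → R), ∑ z ∈ G, P x z * h z = ∑ z, P x z * h z := fun x h =>
    Finset.sum_subset (Finset.subset_univ G) fun z _ hz => by rw [hG x z hz, zero_mul]
  calc ∏ x ∈ S, ∑ z, P x z * f z
      = ∏ x, ∑ z ∈ G, P x z * if x ∈ S then f z else 1 := by
        rw [← Finset.univ_inter S, ← Finset.prod_ite_mem, Finset.univ_inter]
        refine Finset.prod_congr rfl fun x _ => ?_
        split_ifs
        · exact (hsupp x f).symm
        · simp_rw [hsupp x (fun _ => 1), mul_one, hP1]
    _ = ∑ g ∈ Fintype.piFinset fun _ => G, ∏ x, P x (g x) * if x ∈ S then f (g x) else 1 :=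
        Finset.prod_univ_sum _ _
    _ = _ := by
        simp_rw [Finset.prod_mul_distrib, Finset.prod_ite_mem, Finset.univ_inter]

section MeasurableSingletons

variable {E : Type*} [MeasurableSpace E]

variable (E) in
noncomputable def measurableSingletons [Finite E] : Finset E :=
  (Set.toFinite {y : E | MeasurableSet ({y} : Set E)}).toFinset

theorem mem_measurableSingletons [Finite E] {y : E} :
    y ∈ measurableSingletons E ↔ MeasurableSet ({y} : Set E) :=
  Set.Finite.mem_toFinset _

/-- Moving the coordinate `ω j x` within its measurable atom cannot leave a measurable set. -/
theorem measure_coord_mem_measurableAtom_le (Q : Measure (ℤ → E → E)) (j : ℤ) (x y : E) :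
    Q {ω | ω j x ∈ measurableAtom y} ≤ Q {ω | ω j x = y} := by
  classical
  rw [← measure_toMeasurable {ω : ℤ → E → E | ω j x = y}]
  refine measure_mono fun ω hω => ?_
  set f : E → ℤ → E → E := fun e => Function.update ω j (Function.update (ω j) x e)
  have hf : Measurable f := (measurable_update ω).comp (measurable_update (ω j))
  have hfy : f y ∈ toMeasurable Q {ω : ℤ → E → E | ω j x = y} :=
    subset_toMeasurable Q _ (by simp [f])
  simpa [f] using mem_of_mem_measurableAtom hω (hf (measurableSet_toMeasurable Q _)) hfy

theorem measure_coord_eq_zero_of_not_measurableSet_singleton [Fintype E]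
    (Q : Measure (ℤ → E → E)) [IsProbabilityMeasure Q] {j : ℤ} {x : E}
    (hsum : ∑ y, Q {ω | ω j x = y} = 1) {y : E} (hy : ¬MeasurableSet ({y} : Set E)) :
    Q {ω | ω j x = y} = 0 := by
  classical
  set A := measurableAtom y
  set p : E → ℝ≥0∞ := fun z => Q {ω | ω j x = z}
  have hA : MeasurableSet A := MeasurableSet.measurableAtom_of_countable y
  obtain ⟨y', hy'A, hy'y⟩ : ∃ y' ∈ A, y' ≠ y := by
    by_contra! h
    exact hy (Set.eq_singleton_iff_unique_mem.mpr ⟨mem_measurableAtom_self y, h⟩ ▸ hA)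
  set R := ∑ z ∈ Finset.univ.filter (· ∉ A), p z
  have hin : Q {ω | ω j x ∈ A} ≤ p y' := by
    simpa only [measurableAtom_eq_of_mem hy'A] using measure_coord_mem_measurableAtom_le Q j x y'
  have hout : Q {ω | ω j x ∉ A} ≤ R := by
    refine (measure_mono fun ω hω => ?_).trans (measure_biUnion_finset_le _ _)
    exact Set.mem_biUnion (Finset.mem_filter.mpr ⟨Finset.mem_univ _, hω⟩) rfl
  have hupper : p y + (p y' + R) ≤ 1 := by
    rw [← add_assoc, ← hsum, ← Finset.sum_filter_add_sum_filter_not _ (· ∈ A)]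
    gcongr
    exact Finset.add_le_sum (fun _ _ => zero_le) (by simp [A]) (by simpa using hy'A)
      hy'y.symm
  have hlower : (1 : ℝ≥0∞) ≤ p y' + R := by
    have hmeas : MeasurableSet {ω : ℤ → E → E | ω j x ∈ A} :=
      hA.preimage (by fun_prop)
    calc (1 : ℝ≥0∞) = Q {ω | ω j x ∈ A} + Q {ω | ω j x ∉ A} := by
          rw [← measure_univ (μ := Q), ← measure_add_measure_compl hmeas]; rfl
      _ ≤ p y' + R := add_le_add hin hout
  have hfin : p y' + R ≠ ⊤ := ((le_add_self.trans hupper).trans_lt ENNReal.one_lt_top).ne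
  have h : p y + (p y' + R) ≤ 0 + (p y' + R) := by simpa using hupper.trans hlower
  exact nonpos_iff_eq_zero.mp ((ENNReal.add_le_add_iff_right hfin).mp h)

end MeasurableSingletons

section CoordinateEvents

variable {E : Type*} [MeasurableSpace E]

abbrev coordEvents (P : Set (ℤ × E)) : MeasurableSpace (ℤ → E → E) :=
  ⨆ p ∈ P, MeasurableSpace.comap (fun ω : ℤ → E → E => ω p.1 p.2) inferInstance

theorem comap_coord_le (p : ℤ × E) :
    MeasurableSpace.comap (fun ω : ℤ → E → E => ω p.1 p.2) inferInstance ≤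
      (inferInstance : MeasurableSpace (ℤ → E → E)) :=
  Measurable.comap_le (by fun_prop)

theorem coordEvents_le (P : Set (ℤ × E)) :
    coordEvents P ≤ (inferInstance : MeasurableSpace (ℤ → E → E)) :=
  iSup₂_le fun p _ => comap_coord_le p

theorem coordEvents_mono {P P' : Set (ℤ × E)} (h : P ⊆ P') : coordEvents P ≤ coordEvents P' :=
  biSup_mono h

theorem measurableSet_coord_eq {P : Set (ℤ × E)} {j : ℤ} {x y : E} (hP : (j, x) ∈ P)
    (hy : MeasurableSet ({y} : Set E)) :
    MeasurableSet[coordEvents P] {ω : ℤ → E → E | ω j x = y} :=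
  le_iSup₂ (f := fun (p : ℤ × E) (_ : p ∈ P) =>
    MeasurableSpace.comap (fun ω : ℤ → E → E => ω p.1 p.2) inferInstance) (j, x) hP _
    ⟨{y}, hy, rfl⟩

theorem measurableSet_layer_eq [Countable E] {P : Set (ℤ × E)} {j : ℤ} {g : E → E}
    (hP : ∀ x, (j, x) ∈ P) (hg : ∀ x, MeasurableSet ({g x} : Set E)) :
    MeasurableSet[coordEvents P] {ω : ℤ → E → E | ω j = g} := by
  simp only [funext_iff, Set.ofPred_forall]
  exact MeasurableSet.iInter fun x => measurableSet_coord_eq (hP x) (hg x)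

theorem indep_coordEvents {Q : Measure (ℤ → E → E)}
    (hind : iIndepFun (fun (p : ℤ × E) (ω : ℤ → E → E) => ω p.1 p.2) Q)
    {P P' : Set (ℤ × E)} (h : Disjoint P P') : Indep (coordEvents P) (coordEvents P') Q :=
  indep_iSup_of_disjoint comap_coord_le ((iIndepFun_iff_iIndep _ _ _).mp hind) h

theorem measure_layer_eq [Fintype E] {Q : Measure (ℤ → E → E)}
    (hind : iIndepFun (fun (p : ℤ × E) (ω : ℤ → E → E) => ω p.1 p.2) Q) (j : ℤ) {g : E → E}
    (hg : ∀ x, MeasurableSet ({g x} : Set E)) :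
    Q {ω | ω j = g} = ∏ x, Q {ω | ω j x = g x} := by
  have h := hind.measure_inter_preimage_eq_mul ({j} ×ˢ Finset.univ) (sets := fun p => {g p.2})
    fun p _ => hg p.2
  simp only [Finset.prod_product, Finset.prod_singleton, Finset.mem_product,
    Finset.mem_singleton, Finset.mem_univ, and_true] at h
  convert h using 2
  · ext ω
    simp only [Set.mem_iInter, Set.mem_preimage, Set.mem_singleton_iff, funext_iff]
    exact ⟨fun h p hp => hp ▸ h p.2, fun h x => h (j, x) rfl⟩
  · rfl

end CoordinateEvents

section Coalescence

variable {E : Type*} [MeasurableSpace E]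

/-- The values in layers `n + 1, …, k` are required to have measurable singletons so that the
event is measurable; the other values carry no mass. -/
def coalescingEvent (xstar : E) (n k : ℤ) (S : Finset E) : Set (ℤ → E → E) :=
  {ω | (∀ j ∈ Set.Ioc n k, ∀ x, MeasurableSet ({ω j x} : Set E)) ∧
    ∀ x ∈ S, PhiMap ω n k x = xstar}

theorem coalescingEvent_of_not_lt {xstar : E} {n k : ℤ} (hnk : ¬n < k) (S : Finset E) :
    coalescingEvent xstar n k S = {_ω | ∀ x ∈ S, x = xstar} := by
  simp [coalescingEvent, PhiMap_of_not_lt _ hnk, Set.Ioc_eq_empty hnk]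

variable [Fintype E] [DecidableEq E]

theorem coalescingEvent_eq_biUnion {xstar : E} {n k : ℤ} (hnk : n < k) (S : Finset E) :
    coalescingEvent xstar n k S =
      ⋃ g ∈ Fintype.piFinset fun _ => measurableSingletons E,
        {ω | ω (n + 1) = g} ∩ coalescingEvent xstar (n + 1) k (S.image g) := by
  ext ω
  simp only [coalescingEvent, Set.mem_iUnion, Set.mem_inter_iff, Set.mem_ofPred_eq,
    Fintype.mem_piFinset, mem_measurableSingletons, Finset.forall_mem_image, exists_prop,
    PhiMap_of_lt ω hnk]
  constructor
  · rintro ⟨hmeas, hS⟩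
    exact ⟨ω (n + 1), hmeas (n + 1) (by simp [hnk]), rfl,
      fun j hj => hmeas j ⟨by linarith [hj.1], hj.2⟩, hS⟩
  · rintro ⟨g, hg, rfl, hmeas, hS⟩
    refine ⟨fun j hj => ?_, hS⟩
    rcases (Int.add_one_le_of_lt hj.1).eq_or_lt with rfl | hlt
    · exact hg
    · exact hmeas j ⟨hlt, hj.2⟩

theorem measurableSet_coalescingEvent (xstar : E) (n k : ℤ) (S : Finset E) :
    MeasurableSet[coordEvents (Set.Ioc n k ×ˢ Set.univ)] (coalescingEvent xstar n k S) := by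
  by_cases hnk : n < k
  · rw [coalescingEvent_eq_biUnion hnk]
    refine Finset.measurableSet_biUnion _ fun g hg => MeasurableSet.inter ?_ ?_
    · exact measurableSet_layer_eq (fun x => ⟨⟨by linarith, hnk⟩, trivial⟩)
        fun x => mem_measurableSingletons.mp (Fintype.mem_piFinset.mp hg x)
    · exact coordEvents_mono (Set.prod_mono (Set.Ioc_subset_Ioc_left (by linarith)) le_rfl) _
        (measurableSet_coalescingEvent xstar (n + 1) k _)
  · rw [coalescingEvent_of_not_lt hnk]
    exact MeasurableSet.const _
termination_by (k - n).toNat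

end Coalescence

section Coupling

variable {E : Type*} [Fintype E] [MeasurableSpace E] {M : ℤ → E → E → ℝ}
  {Q : Measure (ℤ → E → E)}

theorem eq_zero_of_not_mem_measurableSingletons [IsProbabilityMeasure Q]
    (hM0 : ∀ n x x', 0 ≤ M n x x') (hM1 : ∀ n x, ∑ x', M n x x' = 1)
    (hmarg : ∀ (n : ℤ) (x x' : E), Q {ω | ω n x = x'} = ENNReal.ofReal (M n x x'))
    {j : ℤ} {x y : E} (hy : y ∉ measurableSingletons E) :
    M j x y = 0 := by
  have hsum : ∑ y, Q {ω | ω j x = y} = 1 := by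
    simp_rw [hmarg, ← ENNReal.ofReal_sum_of_nonneg fun y _ => hM0 j x y, hM1, ENNReal.ofReal_one]
  have h := measure_coord_eq_zero_of_not_measurableSet_singleton Q hsum
    (mem_measurableSingletons.not.mp hy)
  rw [hmarg, ENNReal.ofReal_eq_zero] at h
  exact le_antisymm h (hM0 j x y)

theorem measure_layer_eq_ofReal_prod (hM0 : ∀ n x x', 0 ≤ M n x x')
    (hind : iIndepFun (fun (p : ℤ × E) (ω : ℤ → E → E) => ω p.1 p.2) Q)
    (hmarg : ∀ (n : ℤ) (x x' : E), Q {ω | ω n x = x'} = ENNReal.ofReal (M n x x'))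
    (j : ℤ) {g : E → E} (hg : ∀ x, MeasurableSet ({g x} : Set E)) :
    Q {ω | ω j = g} = ENNReal.ofReal (∏ x, M j x (g x)) := by
  rw [measure_layer_eq hind j hg, ENNReal.ofReal_prod_of_nonneg fun x _ => hM0 j x (g x)]
  simp_rw [hmarg]

theorem measure_coalescingEvent_eq_sum [DecidableEq E]
    (hind : iIndepFun (fun (p : ℤ × E) (ω : ℤ → E → E) => ω p.1 p.2) Q)
    (xstar : E) {n k : ℤ} (hnk : n < k) (S : Finset E) :
    Q (coalescingEvent xstar n k S) =
      ∑ g ∈ Fintype.piFinset fun _ => measurableSingletons E,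
        Q {ω | ω (n + 1) = g} * Q (coalescingEvent xstar (n + 1) k (S.image g)) := by
  have hlayer : ∀ g ∈ Fintype.piFinset fun _ => measurableSingletons E,
      MeasurableSet[coordEvents ({n + 1} ×ˢ Set.univ)] {ω | ω (n + 1) = g} := fun g hg =>
    measurableSet_layer_eq (fun x => ⟨rfl, trivial⟩)
      fun x => mem_measurableSingletons.mp (Fintype.mem_piFinset.mp hg x)
  have hindep : Indep (coordEvents ({n + 1} ×ˢ Set.univ))
      (coordEvents (Set.Ioc (n + 1) k ×ˢ Set.univ)) Q :=
    indep_coordEvents hind (Set.disjoint_prod.mpr (Or.inl (by simp)))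
  rw [coalescingEvent_eq_biUnion hnk, measure_biUnion_finset
    (fun g _ g' _ hne => Set.disjoint_left.mpr fun ω h h' => hne (h.1.symm.trans h'.1))
    fun g hg => (coordEvents_le _ _ (hlayer g hg)).inter
      (coordEvents_le _ _ (measurableSet_coalescingEvent xstar (n + 1) k _))]
  exact Finset.sum_congr rfl fun g hg => (Indep_iff _ _ _).mp hindep _ _ (hlayer g hg)
    (measurableSet_coalescingEvent xstar (n + 1) k _)

theorem ofReal_prod_backProd_le_measure_coalescingEvent [DecidableEq E] [IsProbabilityMeasure Q]
    (hM0 : ∀ n x x', 0 ≤ M n x x') (hM1 : ∀ n x, ∑ x', M n x x' = 1)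
    (hind : iIndepFun (fun (p : ℤ × E) (ω : ℤ → E → E) => ω p.1 p.2) Q)
    (hmarg : ∀ (n : ℤ) (x x' : E), Q {ω | ω n x = x'} = ENNReal.ofReal (M n x x'))
    (xstar : E) (n k : ℤ) (S : Finset E) :
    ENNReal.ofReal (∏ x ∈ S, backProd M n k x xstar) ≤ Q (coalescingEvent xstar n k S) := by
  by_cases hnk : n < k
  · have hM0prod : ∀ g : E → E, 0 ≤ ∏ x, M (n + 1) x (g x) := fun g =>
      Finset.prod_nonneg fun x _ => hM0 _ _ _
    calc ENNReal.ofReal (∏ x ∈ S, backProd M n k x xstar)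
        = ∑ g ∈ Fintype.piFinset fun _ => measurableSingletons E,
            ENNReal.ofReal (∏ x, M (n + 1) x (g x)) *
              ENNReal.ofReal (∏ x ∈ S, backProd M (n + 1) k (g x) xstar) := by
          simp_rw [backProd_of_lt M hnk]
          rw [Finset.prod_sum_mul_eq_sum_piFinset (hM1 (n + 1))
            (fun x z hz => eq_zero_of_not_mem_measurableSingletons hM0 hM1 hmarg hz),
            ENNReal.ofReal_sum_of_nonneg fun g _ => mul_nonneg (hM0prod g)
              (Finset.prod_nonneg fun x _ => backProd_nonneg hM0 _ _ _ _)]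
          simp_rw [ENNReal.ofReal_mul (hM0prod _)]
      _ ≤ ∑ g ∈ Fintype.piFinset fun _ => measurableSingletons E,
            Q {ω | ω (n + 1) = g} * Q (coalescingEvent xstar (n + 1) k (S.image g)) := by
          gcongr with g hg
          · exact (measure_layer_eq_ofReal_prod hM0 hind hmarg _
              fun x => mem_measurableSingletons.mp (Fintype.mem_piFinset.mp hg x)).ge
          · exact (ENNReal.ofReal_le_ofReal (Finset.prod_comp_le_prod_image
              (fun y => backProd_nonneg hM0 _ _ y xstar)
              (fun y => backProd_le_one hM0 hM1 _ _ y xstar) S g)).trans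
              (ofReal_prod_backProd_le_measure_coalescingEvent hM0 hM1 hind hmarg _ _ _ _)
      _ = Q (coalescingEvent xstar n k S) := (measure_coalescingEvent_eq_sum hind xstar hnk S).symm
  · rw [coalescingEvent_of_not_lt hnk]
    by_cases hS : ∀ x ∈ S, x = xstar
    · have hprod : ∏ x ∈ S, backProd M n k x xstar = 1 :=
        Finset.prod_eq_one fun x hx => by rw [backProd_of_not_lt M hnk, if_pos (hS x hx)]
      rw [show {_ω : ℤ → E → E | ∀ x ∈ S, x = xstar} = Set.univ from
        Set.eq_univ_of_forall fun _ => hS, hprod]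
      simp
    · obtain ⟨x, hx, hxne⟩ := not_forall₂.mp hS
      have hprod : ∏ x ∈ S, backProd M n k x xstar = 0 :=
        Finset.prod_eq_zero hx (by rw [backProd_of_not_lt M hnk, if_neg hxne])
      simp [hprod]
termination_by (k - n).toNat

end Coupling

theorem coalescence_prob_lower_bound_general {E : Type*} [Fintype E] [DecidableEq E]
    [MeasurableSpace E]
    (M : ℤ → E → E → ℝ) (hM0 : ∀ n x x', 0 ≤ M n x x') (hM1 : ∀ n x, ∑ x', M n x x' = 1)
    (Q : Measure (ℤ → E → E)) [IsProbabilityMeasure Q]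
    (hind : iIndepFun (fun (p : ℤ × E) (ω : ℤ → E → E) => ω p.1 p.2) Q)
    (hmarg : ∀ (n : ℤ) (x x' : E), Q {ω | ω n x = x'} = ENNReal.ofReal (M n x x'))
    (n k : ℤ)
    (ε : ℝ) (hε : 0 < ε) (xstar : E) (hmin : ∀ x, ε ≤ backProd M n k x xstar) :
    ENNReal.ofReal (ε ^ Fintype.card E)
      ≤ Q {ω | ∃ c, ∀ x, PhiMap ω n k x = c} := by
  have hpow : ε ^ Fintype.card E ≤ ∏ x, backProd M n k x xstar := by
    rw [← Finset.card_univ, ← Finset.prod_const]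
    exact Finset.prod_le_prod (fun _ _ => hε.le) fun x _ => hmin x
  calc ENNReal.ofReal (ε ^ Fintype.card E)
      ≤ ENNReal.ofReal (∏ x, backProd M n k x xstar) := ENNReal.ofReal_le_ofReal hpow
    _ ≤ Q (coalescingEvent xstar n k Finset.univ) :=
        ofReal_prod_backProd_le_measure_coalescingEvent hM0 hM1 hind hmarg xstar n k _
    _ ≤ Q {ω | ∃ c, ∀ x, PhiMap ω n k x = c} :=
        measure_mono fun ω hω => ⟨xstar, fun x => hω.2 x (Finset.mem_univ x)⟩

/-- If the backward product `M_{n,k}` has a column `x*` uniformly bounded below by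
`ε > 0`, then under the independent coupling the probability that the image of
`Φ_{n,k}` is a singleton is at least `ε^s`, `s = card E`. -/
theorem coalescence_prob_lower_bound {E : Type*} [Fintype E] [Nonempty E] [DecidableEq E]
    [MeasurableSpace E]
    (M : ℤ → E → E → ℝ) (hM0 : ∀ n x x', 0 ≤ M n x x') (hM1 : ∀ n x, ∑ x', M n x x' = 1)
    (Q : Measure (ℤ → E → E)) [IsProbabilityMeasure Q]
    (hind : iIndepFun (fun (p : ℤ × E) (ω : ℤ → E → E) => ω p.1 p.2) Q)
    (hmarg : ∀ (n : ℤ) (x x' : E), Q {ω | ω n x = x'} = ENNReal.ofReal (M n x x'))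
    (n k : ℤ) (hnk : n < k) (hk : k ≤ 0)
    (ε : ℝ) (hε : 0 < ε) (xstar : E) (hmin : ∀ x, ε ≤ backProd M n k x xstar) :
    ENNReal.ofReal (ε ^ Fintype.card E)
      ≤ Q {ω | ∃ c, ∀ x, PhiMap ω n k x = c} :=
  coalescence_prob_lower_bound_general M hM0 hM1 Q hind hmarg n k ε hε xstar hmin
end

section
/- Under the independent coupling measure Q for a sequence of Markov kernels M on a finite set E, for any n, k, k' with k' < k < n ≤ 0, the coalescence times satisfy Q(T_n < k') ≤ Q(T_n < k) · Q(T_k < k'), i.e., the tail probabilities of coalescence times are submultiplicative. -/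
open scoped BigOperators
open MeasureTheory ProbabilityTheory Filter

/-- The event `{T_n < k}`: no coalescence of `Φ_{m,n}` for any `m` with `k ≤ m < n`. -/
def noCoalEvent {E : Type*} (n k : ℤ) : Set (ℤ → E → E) :=
  {ω | ∀ m, k ≤ m → m < n → ¬ ∃ c, ∀ x, PhiMap ω m n x = c}

/-!
Coalescence of `Φ_{m,k}` for some `k' ≤ m < k` forces coalescence of `Φ_{m,n} = Φ_{k,n} ∘ Φ_{m,k}`,
so `{T_n < k'} ⊆ {T_n < k} ∩ {T_k < k'}`, and these two events are determined by the disjoint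
blocks `(k, n]` and `(k', k]` of coordinates, hence independent.

Since `E` carries an arbitrary σ-algebra, these events need not be measurable. The marginal
hypothesis rules this out up to null sets: the outer measures of `{ω t y = x}` add up to `1`,
while measurable sets cannot tell apart values in the same measurable atom, so a.s. every
coordinate lies in a singleton atom. An event determined by finitely many coordinates is then
a.e. equal to a measurable cylinder.
-/

namespace PhiMap

variable {E : Type*} (ω : ℤ → E → E)

lemma of_lt {m n : ℤ} (h : m < n) (x : E) :
    PhiMap ω m n x = PhiMap ω (m + 1) n (ω (m + 1) x) := by
  rw [PhiMap, dif_pos h]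

lemma of_not_lt {m n : ℤ} (h : ¬ m < n) (x : E) : PhiMap ω m n x = x := by
  rw [PhiMap, dif_neg h]

lemma trans {m k n : ℤ} (hmk : m ≤ k) (hkn : k ≤ n) (x : E) :
    PhiMap ω m n x = PhiMap ω k n (PhiMap ω m k x) := by
  induction m, hmk using Int.leInductionDown generalizing x with
  | base => rw [of_not_lt ω (lt_irrefl k)]
  | pred m hm ih =>
    rw [of_lt ω (by omega : m - 1 < n), of_lt ω (by omega : m - 1 < k), sub_add_cancel, ih]

lemma congr {ω' : ℤ → E → E} {m n : ℤ} (h : ∀ t, m < t → t ≤ n → ω t = ω' t) :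
    PhiMap ω m n = PhiMap ω' m n := by
  rcases le_or_gt m n with hmn | hnm
  · induction m, hmn using Int.leInductionDown with
    | base => funext x; rw [of_not_lt ω (lt_irrefl n), of_not_lt ω' (lt_irrefl n)]
    | pred m hm ih =>
      funext x
      rw [of_lt ω (by omega), of_lt ω' (by omega), sub_add_cancel,
        ih fun t ht htn => h t (by omega) htn, h m (by omega) hm]
  · funext x; rw [of_not_lt ω (by omega), of_not_lt ω' (by omega)]

end PhiMap

section noCoalEvent

variable {E : Type*}

lemma noCoalEvent_monotone (n : ℤ) : Monotone (noCoalEvent (E := E) n) :=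
  fun _ _ hk _ hω m hkm hmn => hω m (hk.trans hkm) hmn

lemma noCoalEvent_subset_of_le {n k k' : ℤ} (hkn : k ≤ n) :
    noCoalEvent (E := E) n k' ⊆ noCoalEvent k k' := by
  rintro ω hω m hkm hmk ⟨c, hc⟩
  refine hω m hkm (hmk.trans_le hkn) ⟨PhiMap ω k n c, fun x => ?_⟩
  rw [PhiMap.trans ω hmk.le hkn, hc]

lemma noCoalEvent_of_eqOn {n k : ℤ} {ω ω' : ℤ → E → E}
    (h : ∀ t ∈ Finset.Ioc k n, ∀ x, ω t x = ω' t x) (hω : ω ∈ noCoalEvent n k) :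
    ω' ∈ noCoalEvent n k := by
  rintro m hkm hmn ⟨c, hc⟩
  refine hω m hkm hmn ⟨c, fun x => ?_⟩
  rw [PhiMap.congr ω fun t hmt htn => funext (h t (Finset.mem_Ioc.2 ⟨by omega, htn⟩)), hc]

end noCoalEvent

section measurableAtom

variable {α β : Type*} [MeasurableSpace α] [MeasurableSpace β]

lemma mem_measurableAtom_comm {x y : α} : y ∈ measurableAtom x ↔ x ∈ measurableAtom y :=
  ⟨fun h => measurableAtom_eq_of_mem h ▸ mem_measurableAtom_self x,
    fun h => measurableAtom_eq_of_mem h ▸ mem_measurableAtom_self y⟩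

lemma Measurable.mem_measurableAtom {f : α → β} (hf : Measurable f) {x y : α}
    (h : y ∈ measurableAtom x) : f y ∈ measurableAtom (f x) :=
  Set.mem_iInter₂.2 fun _ hx => Set.mem_iInter.2 fun hs =>
    mem_of_mem_measurableAtom h (hf hs) hx

lemma measure_preimage_measurableAtom_le (μ : Measure α) (X : α → β) (g : α → β → α)
    (hg : ∀ ω, Measurable (g ω)) (hgX : ∀ ω, g ω (X ω) = ω) (hXg : ∀ ω e, X (g ω e) = e)
    (x : β) : μ (X ⁻¹' measurableAtom x) ≤ μ (X ⁻¹' {x}) := by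
  -- measurable sets do not separate `ω = g ω (X ω)` from `g ω x ∈ X ⁻¹' {x}`
  rw [← measure_toMeasurable (X ⁻¹' {x})]
  refine measure_mono fun ω hω => ?_
  have hgx : g ω x ∈ toMeasurable μ (X ⁻¹' {x}) := subset_toMeasurable _ _ (hXg ω x)
  have hatom : g ω (X ω) ∈ measurableAtom (g ω x) := (hg ω).mem_measurableAtom hω
  rw [hgX] at hatom
  exact mem_of_mem_measurableAtom hatom (measurableSet_toMeasurable _ _) hgx

lemma ae_measurableAtom_eq_singleton [Fintype α] (ν : Measure α) [IsFiniteMeasure ν]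
    (hsum : ∑ x, ν (measurableAtom x) ≤ ν Set.univ) : ∀ᵐ x ∂ν, measurableAtom x = {x} := by
  classical
  have hnull : ∀ x, measurableAtom x ≠ {x} → ν (measurableAtom x) = 0 := by
    intro x hx
    -- a second point `x'` of the atom of `x` lets the other atoms cover `α`,
    -- so `hsum` counts this atom on top of the total mass
    obtain ⟨x', hx', hne⟩ : ∃ x' ∈ measurableAtom x, x' ≠ x := by
      by_contra! h
      exact hx (Set.eq_singleton_iff_unique_mem.2 ⟨mem_measurableAtom_self x, h⟩)
    have hcover : Set.univ ⊆ ⋃ z ∈ Finset.univ.erase x, measurableAtom z := by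
      intro e _
      by_cases he : e = x
      · exact Set.mem_biUnion (Finset.mem_erase.2 ⟨hne, Finset.mem_univ x'⟩)
          (he ▸ mem_measurableAtom_comm.1 hx')
      · exact Set.mem_biUnion (Finset.mem_erase.2 ⟨he, Finset.mem_univ e⟩)
          (mem_measurableAtom_self e)
    refine le_antisymm (ENNReal.le_of_add_le_add_right (measure_ne_top ν Set.univ) ?_) zero_le
    calc ν (measurableAtom x) + ν Set.univ
        ≤ ν (measurableAtom x) + ∑ z ∈ Finset.univ.erase x, ν (measurableAtom z) :=
          add_le_add_right ((measure_mono hcover).trans (measure_biUnion_finset_le _ _)) _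
      _ = ∑ z, ν (measurableAtom z) :=
          Finset.add_sum_erase _ (fun z => ν (measurableAtom z)) (Finset.mem_univ x)
      _ ≤ 0 + ν Set.univ := by rwa [zero_add]
  exact ae_iff.2 (measure_mono_null (fun x hx => Set.mem_biUnion hx (mem_measurableAtom_self x))
    ((measure_biUnion_null_iff (Set.to_countable _)).2 hnull))

end measurableAtom

section independence

variable {Ω ι E : Type*} [MeasurableSpace Ω] [MeasurableSpace E] {μ : Measure Ω}
  {X : ι → Ω → E}

lemma exists_measurableSet_preimage_ae_eq [Countable E] {S : Finset ι}
    (hX : ∀ i ∈ S, ∀ᵐ ω ∂μ, measurableAtom (X i ω) = {X i ω}) {A : Set Ω}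
    (hA : ∀ ω ω', (∀ i ∈ S, X i ω = X i ω') → ω ∈ A → ω' ∈ A) :
    ∃ C : Set (S → E), MeasurableSet C ∧ (fun ω (i : S) => X i ω) ⁻¹' C =ᵐ[μ] A := by
  set φ : Ω → S → E := fun ω i => X i ω
  refine ⟨⋃ g ∈ φ '' A, measurableAtom g,
    .biUnion (Set.to_countable _) fun g _ => .measurableAtom_of_countable g, ?_⟩
  filter_upwards [(Filter.eventually_all_finset S).2 hX] with ω hω
  refine eq_iff_iff.2
    ⟨fun hmem => ?_, fun hωA => Set.mem_biUnion ⟨ω, hωA, rfl⟩ (mem_measurableAtom_self _)⟩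
  obtain ⟨_, ⟨f, hfA, rfl⟩, hωf⟩ := Set.mem_iUnion₂.1 hmem
  refine hA f ω (fun i hi => ?_) hfA
  have : X i f ∈ measurableAtom (X i ω) :=
    mem_measurableAtom_comm.1 ((measurable_pi_apply ⟨i, hi⟩).mem_measurableAtom hωf)
  rwa [hω i hi] at this

lemma ProbabilityTheory.iIndepFun.measure_inter_eq_mul_of_determined [Countable E]
    (hind : iIndepFun X μ) (hmeas : ∀ i, Measurable (X i))
    (hatom : ∀ i, ∀ᵐ ω ∂μ, measurableAtom (X i ω) = {X i ω})
    {S T : Finset ι} (hST : Disjoint S T) {A B : Set Ω}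
    (hA : ∀ ω ω', (∀ i ∈ S, X i ω = X i ω') → ω ∈ A → ω' ∈ A)
    (hB : ∀ ω ω', (∀ i ∈ T, X i ω = X i ω') → ω ∈ B → ω' ∈ B) :
    μ (A ∩ B) = μ A * μ B := by
  obtain ⟨C, hC, hCA⟩ := exists_measurableSet_preimage_ae_eq (fun i _ => hatom i) hA
  obtain ⟨D, hD, hDB⟩ := exists_measurableSet_preimage_ae_eq (fun i _ => hatom i) hB
  rw [← measure_congr hCA, ← measure_congr hDB, ← measure_congr (hCA.inter hDB)]
  exact (hind.indepFun_finset S T hST hmeas).measure_inter_preimage_eq_mul C D hC hD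

end independence

lemma ae_measurableAtom_apply_eq_singleton {ι E : Type*} [Fintype E] [MeasurableSpace E]
    (M : ι → E → E → ℝ) (hM0 : ∀ n x x', 0 ≤ M n x x') (hM1 : ∀ n x, ∑ x', M n x x' = 1)
    (Q : Measure (ι → E → E)) [IsProbabilityMeasure Q]
    (hmarg : ∀ n x x', Q {ω | ω n x = x'} = ENNReal.ofReal (M n x x')) (t : ι) (y : E) :
    ∀ᵐ ω ∂Q, measurableAtom (ω t y) = {ω t y} := by
  classical
  have hX : Measurable fun ω : ι → E → E => ω t y :=
    (measurable_pi_apply y).comp (measurable_pi_apply t)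
  refine ae_of_ae_map hX.aemeasurable (ae_measurableAtom_eq_singleton _ ?_)
  have hatom_le : ∀ x, Q.map (fun ω => ω t y) (measurableAtom x) ≤ ENNReal.ofReal (M t y x) := by
    intro x
    rw [Measure.map_apply hX (.measurableAtom_of_countable x), ← hmarg]
    exact measure_preimage_measurableAtom_le Q _
      (fun ω e => Function.update ω t (Function.update (ω t) y e))
      (fun ω => (measurable_update ω).comp (measurable_update (ω t)))
      (fun ω => by simp) (fun ω e => by simp) x
  calc ∑ x, Q.map (fun ω => ω t y) (measurableAtom x) ≤ ∑ x, ENNReal.ofReal (M t y x) :=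
        Finset.sum_le_sum fun x _ => hatom_le x
    _ = Q.map (fun ω => ω t y) Set.univ := by
        rw [← ENNReal.ofReal_sum_of_nonneg fun x _ => hM0 t y x, hM1, ENNReal.ofReal_one,
          Measure.map_apply hX .univ, Set.preimage_univ, measure_univ]

theorem coalescence_tail_submultiplicative_general {E : Type*} [Fintype E]
    [MeasurableSpace E]
    (M : ℤ → E → E → ℝ) (hM0 : ∀ n x x', 0 ≤ M n x x') (hM1 : ∀ n x, ∑ x', M n x x' = 1)
    (Q : Measure (ℤ → E → E)) [IsProbabilityMeasure Q]
    (hind : iIndepFun (fun (p : ℤ × E) (ω : ℤ → E → E) => ω p.1 p.2) Q)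
    (hmarg : ∀ (n : ℤ) (x x' : E), Q {ω | ω n x = x'} = ENNReal.ofReal (M n x x'))
    (n k k' : ℤ) (h1 : k' < k) (h2 : k < n) :
    Q (noCoalEvent n k') ≤ Q (noCoalEvent n k) * Q (noCoalEvent k k') := by
  have hdisj : Disjoint (Finset.Ioc k n ×ˢ Finset.univ)
      (Finset.Ioc k' k ×ˢ (Finset.univ : Finset E)) :=
    Finset.disjoint_product.2 (Or.inl (Finset.disjoint_left.2 fun t ht ht' => by
      rw [Finset.mem_Ioc] at ht ht'; omega))
  have hdetermined : ∀ {a b : ℤ} (ω ω' : ℤ → E → E),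
      (∀ p ∈ Finset.Ioc a b ×ˢ Finset.univ, ω p.1 p.2 = ω' p.1 p.2) →
      ω ∈ noCoalEvent b a → ω' ∈ noCoalEvent b a :=
    fun ω ω' h => noCoalEvent_of_eqOn fun t ht x =>
      h (t, x) (Finset.mem_product.2 ⟨ht, Finset.mem_univ x⟩)
  calc Q (noCoalEvent n k')
      ≤ Q (noCoalEvent n k ∩ noCoalEvent k k') := measure_mono <|
        Set.subset_inter (noCoalEvent_monotone n h1.le) (noCoalEvent_subset_of_le h2.le)
    _ = Q (noCoalEvent n k) * Q (noCoalEvent k k') :=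
        hind.measure_inter_eq_mul_of_determined
          (fun p => (measurable_pi_apply p.2).comp (measurable_pi_apply p.1))
          (fun p => ae_measurableAtom_apply_eq_singleton M hM0 hM1 Q hmarg p.1 p.2) hdisj
          hdetermined hdetermined

/-- Submultiplicativity of tail probabilities of coalescence times:
`Q(T_n < k') ≤ Q(T_n < k) · Q(T_k < k')` for `k' < k < n ≤ 0`. -/
theorem coalescence_tail_submultiplicative {E : Type*} [Fintype E] [Nonempty E]
    [MeasurableSpace E]
    (M : ℤ → E → E → ℝ) (hM0 : ∀ n x x', 0 ≤ M n x x') (hM1 : ∀ n x, ∑ x', M n x x' = 1)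
    (Q : Measure (ℤ → E → E)) [IsProbabilityMeasure Q]
    (hind : iIndepFun (fun (p : ℤ × E) (ω : ℤ → E → E) => ω p.1 p.2) Q)
    (hmarg : ∀ (n : ℤ) (x x' : E), Q {ω | ω n x = x'} = ENNReal.ofReal (M n x x'))
    (n k k' : ℤ) (h1 : k' < k) (h2 : k < n) (h3 : n ≤ 0) :
    Q (noCoalEvent n k') ≤ Q (noCoalEvent n k) * Q (noCoalEvent k k') :=
  coalescence_tail_submultiplicative_general M hM0 hM1 Q hind hmarg n k k' h1 h2
end

section
/- Let M = (M_n)_{n≤0} be Markov kernels on finite E with at least one sequence of absolute probabilities π, and let P_π be the law on E^T of the nonhomogeneous Markov chain with kernels M and marginals π. If there exists a tail event A ∈ ∩_{n≤0} σ(X_k; k ≤ n) with 0 < P_π(A) < 1, then M admits at least two distinct sequences of absolute probabilities. -/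
open scoped BigOperators
open MeasureTheory Filter

/-- A sequence of absolute probabilities for the kernels `M` (on nonpositive times). -/
def IsAbsProbSeq {E : Type*} [Fintype E] (M : ℤ → E → E → ℝ) (π : ℤ → E → ℝ) : Prop :=
  ∀ n ≤ (0 : ℤ), (∀ x, 0 ≤ π n x) ∧ (∑ x, π n x = 1) ∧
    ∀ x, ∑ z, π (n - 1) z * M n z x = π n x

/-- `P` is the law of the nonhomogeneous Markov chain with kernels `M` and
marginals `π`, in terms of its finite dimensional distributions on nonpositive times. -/
def IsLawOf {E : Type*} [Fintype E] [MeasurableSpace E] (M : ℤ → E → E → ℝ)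
    (π : ℤ → E → ℝ) (P : Measure (ℤ → E)) : Prop :=
  ∀ n ≤ (0 : ℤ), ∀ f : ℤ → E,
    P {ω | ∀ m, n ≤ m → m ≤ 0 → ω m = f m}
      = ENNReal.ofReal (π n (f n) * ∏ k ∈ Finset.Icc (n + 1) 0, M k (f (k - 1)) (f k))

/-- The σ-algebra `σ(X_k ; k ≤ n)` generated by coordinates up to time `n`. -/
def coordSigmaLE (E : Type*) [MeasurableSpace E] (n : ℤ) : MeasurableSpace (ℤ → E) :=
  ⨆ k ∈ Set.Iic n, MeasurableSpace.comap (fun ω : ℤ → E => ω k) inferInstance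

/-- The tail σ-algebra `⋂_{n ≤ 0} σ(X_k ; k ≤ n)`. -/
def tailSigma (E : Type*) [MeasurableSpace E] : MeasurableSpace (ℤ → E) :=
  ⨅ n : ℤ, coordSigmaLE E n

/-!
Conditioning on `A` gives the probability measure `P[|A]`. Since `A` lies in `σ(X_k ; k ≤ m)`
for every `m`, the Markov property of `P` with respect to the past survives the conditioning, so
the one-dimensional marginals of `P[|A]` form a sequence of absolute probabilities. If they were
`π`, then `P[|A]` and `P` would have the same kernels and marginals, hence agree on all cylinders
and, by a π-λ argument, on `σ(X_k ; k ≤ 0) ∋ A`; this gives `P A = P[A|A] = 1`.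
-/

open Set Function ProbabilityTheory

section Cylinders

variable {E : Type*}

def intervalCylinder (a b : ℤ) (f : ℤ → E) : Set (ℤ → E) :=
  {ω | ∀ m, a ≤ m → m ≤ b → ω m = f m}

lemma intervalCylinder_self (a : ℤ) (f : ℤ → E) :
    intervalCylinder a a f = {ω | ω a = f a} := by
  ext ω
  refine ⟨fun h => h a le_rfl le_rfl, fun h m h₁ h₂ => ?_⟩
  obtain rfl := le_antisymm h₂ h₁
  exact h

lemma intervalCylinder_of_lt {a b : ℤ} (h : b < a) (f : ℤ → E) :
    intervalCylinder a b f = univ :=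
  eq_univ_of_forall fun _ _ h₁ h₂ => absurd (h₁.trans h₂) h.not_ge

lemma intervalCylinder_sub_one_inter {a b : ℤ} (h : a ≤ b) (f : ℤ → E) (x : E) :
    intervalCylinder a (b - 1) f ∩ {ω | ω b = x} = intervalCylinder a b (update f b x) := by
  ext ω
  simp only [intervalCylinder, mem_inter_iff, mem_ofPred_eq]
  constructor
  · rintro ⟨hω, rfl⟩ m h₁ h₂
    rcases h₂.eq_or_lt with rfl | h₂
    · simp
    · rw [update_of_ne h₂.ne]
      exact hω m h₁ (by omega)
  · intro hω
    refine ⟨fun m h₁ h₂ => ?_, by simpa using hω b h le_rfl⟩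
    simpa [update_of_ne (show m ≠ b by omega)] using hω m h₁ (by omega)

lemma intervalCylinder_add_one_inter {a b : ℤ} (h : a ≤ b) (f : ℤ → E) (x : E) :
    intervalCylinder (a + 1) b f ∩ {ω | ω a = x} = intervalCylinder a b (update f a x) := by
  ext ω
  simp only [intervalCylinder, mem_inter_iff, mem_ofPred_eq]
  constructor
  · rintro ⟨hω, rfl⟩ m h₁ h₂
    rcases h₁.eq_or_lt with rfl | h₁
    · simp
    · rw [update_of_ne h₁.ne']
      exact hω m (by omega) h₂
  · intro hω
    refine ⟨fun m h₁ h₂ => ?_, by simpa using hω a le_rfl h⟩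
    simpa [update_of_ne (show m ≠ a by omega)] using hω m (by omega) h₂

lemma intervalCylinder_inter_intervalCylinder {m a n : ℤ} (hm : m ≤ a) (hn : a ≤ n + 1)
    (g f : ℤ → E) :
    intervalCylinder m (a - 1) g ∩ intervalCylinder a n f
      = intervalCylinder m n (fun k => if k < a then g k else f k) := by
  ext ω
  simp only [intervalCylinder, mem_inter_iff, mem_ofPred_eq]
  constructor
  · rintro ⟨hg, hf⟩ k h₁ h₂
    split_ifs with hk
    · exact hg k h₁ (by omega)
    · exact hf k (by omega) h₂
  · intro hω
    refine ⟨fun k h₁ h₂ => ?_, fun k h₁ h₂ => ?_⟩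
    · simpa [show k < a by omega] using hω k h₁ (by omega)
    · simpa [show ¬ k < a by omega] using hω k (by omega) h₂

lemma compl_intervalCylinder_subset [Fintype E] [DecidableEq E] {a b : ℤ} (h : a ≤ b)
    (f : ℤ → E) :
    (intervalCylinder a b f)ᶜ ⊆ (intervalCylinder (a + 1) b f)ᶜ ∪
      ⋃ x ∈ Finset.univ.erase (f a), intervalCylinder a b (update f a x) := by
  intro ω hω
  by_cases hω' : ω ∈ intervalCylinder (a + 1) b f
  · have hωa : ω a ≠ f a := by
      rintro hωa
      rw [← update_eq_self a f, ← intervalCylinder_add_one_inter h] at hω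
      exact hω ⟨hω', hωa⟩
    refine Or.inr (mem_biUnion (Finset.mem_erase.2 ⟨hωa, Finset.mem_univ _⟩) ?_)
    rw [← intervalCylinder_add_one_inter h]
    exact ⟨hω', rfl⟩
  · exact Or.inl hω'

lemma iUnion_inter_eval_eq {ι : Type*} (s : Set (ι → E)) (k : ι) :
    ⋃ x, s ∩ {ω | ω k = x} = s := by
  ext ω
  simp

end Cylinders

section MeasureLemmas

variable {α : Type*} [MeasurableSpace α] {μ ν : Measure α}

lemma nullMeasurableSet_of_add_compl_le [IsFiniteMeasure μ] {s : Set α}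
    (h : μ s + μ sᶜ ≤ μ univ) : NullMeasurableSet s μ := by
  set t := toMeasurable μ s
  set u := toMeasurable μ sᶜ
  have htu : t ∪ u = univ := eq_univ_of_forall fun x =>
    (em (x ∈ s)).imp (subset_toMeasurable μ s ·) (subset_toMeasurable μ sᶜ ·)
  have hnull : μ (t ∩ u) = 0 := by
    have hadd := measure_union_add_inter (μ := μ) t (measurableSet_toMeasurable μ sᶜ)
    rw [htu, measure_toMeasurable, measure_toMeasurable] at hadd
    refine nonpos_iff_eq_zero.1 (ENNReal.le_of_add_le_add_left (measure_ne_top μ univ) ?_)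
    rw [hadd, add_zero]
    exact h
  refine (measurableSet_toMeasurable μ s).nullMeasurableSet.congr (ae_eq_set.2 ⟨?_, ?_⟩)
  · exact measure_mono_null
      (fun x hx => ⟨hx.1, subset_toMeasurable μ sᶜ hx.2⟩ : t \ s ⊆ t ∩ u) hnull
  · rw [sdiff_eq_empty.2 (subset_toMeasurable μ s), measure_empty]

lemma measure_preimage_eq_of_fibers {β : Type*} [Finite β] (r : α → β)
    (hμ : ∀ x, NullMeasurableSet (r ⁻¹' {r x}) μ) (hν : ∀ x, NullMeasurableSet (r ⁻¹' {r x}) ν)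
    (h : ∀ x, μ (r ⁻¹' {r x}) = ν (r ⁻¹' {r x})) (U : Set β) : μ (r ⁻¹' U) = ν (r ⁻¹' U) := by
  have hfiber : ∀ y, NullMeasurableSet (r ⁻¹' {y}) μ ∧ NullMeasurableSet (r ⁻¹' {y}) ν ∧
      μ (r ⁻¹' {y}) = ν (r ⁻¹' {y}) := fun y => by
    rcases (r ⁻¹' {y}).eq_empty_or_nonempty with hy | ⟨x, rfl⟩
    · simp [hy]
    · exact ⟨hμ x, hν x, h x⟩
  have hdisj := pairwiseDisjoint_fiber r U
  rw [← biUnion_preimage_singleton,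
    measure_biUnion₀ U.to_countable hdisj.aedisjoint fun y _ => (hfiber y).1,
    measure_biUnion₀ U.to_countable hdisj.aedisjoint fun y _ => (hfiber y).2.1]
  exact tsum_congr fun y => (hfiber y).2.2

end MeasureLemmas

lemma measure_eq_sum_inter_eval {ι E : Type*} [Fintype E] [MeasurableSpace E]
    {μ : Measure (ι → E)} (s : Set (ι → E)) (k : ι)
    (h : ∀ x, NullMeasurableSet (s ∩ {ω | ω k = x}) μ) :
    μ s = ∑ x, μ (s ∩ {ω | ω k = x}) := by
  conv_lhs => rw [← iUnion_inter_eval_eq s k]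
  rw [measure_iUnion₀ _ h, tsum_fintype]
  exact fun x y hxy => Disjoint.aedisjoint
    (disjoint_left.2 fun ω hx hy => hxy (hx.2.symm.trans hy.2))

section Extension

variable {E : Type*} [MeasurableSpace E] {μ ν : Measure (ℤ → E)}

lemma measure_add_compl_intervalCylinder_le [Fintype E] [DecidableEq E] (μ : Measure (ℤ → E))
    {a b : ℤ} (h : a ≤ b) (f : ℤ → E) :
    μ (intervalCylinder a b f) + μ (intervalCylinder a b f)ᶜ ≤
      μ (intervalCylinder (a + 1) b f)ᶜ + ∑ x, μ (intervalCylinder a b (update f a x)) :=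
  calc μ (intervalCylinder a b f) + μ (intervalCylinder a b f)ᶜ
      ≤ μ (intervalCylinder a b f) + (μ (intervalCylinder (a + 1) b f)ᶜ +
          ∑ x ∈ Finset.univ.erase (f a), μ (intervalCylinder a b (update f a x))) := by
        gcongr
        exact (measure_mono (compl_intervalCylinder_subset h f)).trans
          ((measure_union_le _ _).trans (by gcongr; exact measure_biUnion_finset_le _ _))
    _ = _ := by
      rw [add_left_comm, ← Finset.add_sum_erase Finset.univ
        (fun x => μ (intervalCylinder a b (update f a x))) (Finset.mem_univ (f a)), update_eq_self]

lemma coordSigmaLE_le_pi (b : ℤ) : coordSigmaLE E b ≤ MeasurableSpace.pi :=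
  iSup₂_le fun k _ => (measurable_pi_apply k).comap_le

lemma measure_eq_of_measurableSet_comap_restrict [Finite E] {m b : ℤ}
    (hμ : ∀ f, NullMeasurableSet (intervalCylinder m b f) μ)
    (hν : ∀ f, NullMeasurableSet (intervalCylinder m b f) ν)
    (h : ∀ f, μ (intervalCylinder m b f) = ν (intervalCylinder m b f)) {s : Set (ℤ → E)}
    (hs : MeasurableSet[MeasurableSpace.comap (fun ω (k : Set.Icc m b) => ω k) ⊤] s) :
    μ s = ν s := by
  obtain ⟨U, -, rfl⟩ := hs
  have hfiber : ∀ ω : ℤ → E, (fun ω' (k : Set.Icc m b) => ω' k) ⁻¹' {fun k : Set.Icc m b => ω k}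
      = intervalCylinder m b ω := fun ω => by
    ext ω'
    simp [intervalCylinder, funext_iff]
  exact measure_preimage_eq_of_fibers _ (fun ω => by simpa only [hfiber] using hμ ω)
    (fun ω => by simpa only [hfiber] using hν ω) (fun ω => by simpa only [hfiber] using h ω) U

lemma exists_measurableSet_comap_restrict_of_mem_piiUnionInter {b : ℤ} {s : Set (ℤ → E)}
    (hs : s ∈ piiUnionInter (fun k =>
      {t | MeasurableSet[MeasurableSpace.comap (fun ω : ℤ → E => ω k) inferInstance] t}) (Iic b)) :
    ∃ m ≤ b, MeasurableSet[MeasurableSpace.comap (fun ω (k : Set.Icc m b) => ω k) ⊤] s := by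
  obtain ⟨F, hF, g, hg, rfl⟩ := hs
  obtain ⟨m₀, hm₀⟩ := F.bddBelow
  refine ⟨min m₀ b, min_le_right _ _, .biInter F.countable_toSet fun k hk => ?_⟩
  have hkI : k ∈ Set.Icc (min m₀ b) b := ⟨(min_le_left _ _).trans (hm₀ hk), hF hk⟩
  have hk_meas : Measurable[MeasurableSpace.comap (fun ω (i : Set.Icc (min m₀ b) b) => ω i) ⊤]
      (fun ω : ℤ → E => ω k) :=
    (measurable_from_top (f := fun p : Set.Icc (min m₀ b) b → E => p ⟨k, hkI⟩)).comp
      (comap_measurable _)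
  exact hk_meas.comap_le _ (hg k hk)

lemma measure_eq_of_intervalCylinder_eq [Finite E] [IsFiniteMeasure μ] [IsFiniteMeasure ν]
    {b : ℤ} (hμ : ∀ m ≤ b, ∀ f, NullMeasurableSet (intervalCylinder m b f) μ)
    (hν : ∀ m ≤ b, ∀ f, NullMeasurableSet (intervalCylinder m b f) ν)
    (h : ∀ m ≤ b, ∀ f, μ (intervalCylinder m b f) = ν (intervalCylinder m b f))
    {B : Set (ℤ → E)} (hB : MeasurableSet[coordSigmaLE E b] B) : μ B = ν B := by
  set C := piiUnionInter (fun k =>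
    {s | MeasurableSet[MeasurableSpace.comap (fun ω : ℤ → E => ω k) inferInstance] s}) (Iic b)
  have hgen : coordSigmaLE E b = MeasurableSpace.generateFrom C :=
    (generateFrom_piiUnionInter_measurableSet _ _).symm
  have hC : ∀ s ∈ C, μ s = ν s := fun s hs => by
    obtain ⟨m, hm, hs⟩ := exists_measurableSet_comap_restrict_of_mem_piiUnionInter hs
    exact measure_eq_of_measurableSet_comap_restrict (hμ m hm) (hν m hm) (h m hm) hs
  have hle := coordSigmaLE_le_pi (E := E) b
  have hCm : ∀ s ∈ C, MeasurableSet[coordSigmaLE E b] s := fun s hs =>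
    hgen ▸ MeasurableSpace.measurableSet_generateFrom hs
  have htrim : μ.trim hle = ν.trim hle := by
    refine ext_of_generate_finite C hgen (isPiSystem_piiUnionInter _
      (fun k => @MeasurableSpace.isPiSystem_measurableSet _ (MeasurableSpace.comap _ _)) _)
      (fun s hs => ?_) ?_
    · rw [trim_measurableSet_eq hle (hCm s hs), trim_measurableSet_eq hle (hCm s hs), hC s hs]
    · rw [trim_measurableSet_eq hle .univ, trim_measurableSet_eq hle .univ]
      exact measure_eq_of_measurableSet_comap_restrict (hμ b le_rfl) (hν b le_rfl) (h b le_rfl)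
        MeasurableSet.univ
  rw [← trim_measurableSet_eq hle hB, htrim, trim_measurableSet_eq hle hB]

end Extension

section PathWeight

variable {E : Type*} (M : ℤ → E → E → ℝ)

noncomputable def pathWeight (a b : ℤ) (f : ℤ → E) : ℝ :=
  ∏ k ∈ Finset.Icc (a + 1) b, M k (f (k - 1)) (f k)

lemma pathWeight_self (a : ℤ) (f : ℤ → E) : pathWeight M a a f = 1 :=
  Finset.prod_eq_one fun k hk => absurd (Finset.mem_Icc.1 hk) (by omega)

lemma pathWeight_congr {a b : ℤ} {f g : ℤ → E} (h : ∀ m, a ≤ m → m ≤ b → f m = g m) :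
    pathWeight M a b f = pathWeight M a b g :=
  Finset.prod_congr rfl fun k hk => by
    rw [Finset.mem_Icc] at hk
    rw [h k (by omega) hk.2, h (k - 1) (by omega) (by omega)]

lemma pathWeight_nonneg (hM0 : ∀ n x x', 0 ≤ M n x x') (a b : ℤ) (f : ℤ → E) :
    0 ≤ pathWeight M a b f :=
  Finset.prod_nonneg fun k _ => hM0 k _ _

lemma pathWeight_eq_mul_right {a b : ℤ} (h : a < b) (f : ℤ → E) :
    pathWeight M a b f = pathWeight M a (b - 1) f * M b (f (b - 1)) (f b) := by
  rw [pathWeight, pathWeight, ← Finset.insert_Icc_sub_one_right_eq_Icc (by omega : a + 1 ≤ b),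
    Finset.prod_insert (by simp), mul_comm]

lemma pathWeight_eq_mul_left {a b : ℤ} (h : a < b) (f : ℤ → E) :
    pathWeight M a b f = M (a + 1) (f a) (f (a + 1)) * pathWeight M (a + 1) b f := by
  rw [pathWeight, pathWeight, ← Finset.insert_Icc_add_one_left_eq_Icc (by omega : a + 1 ≤ b),
    Finset.prod_insert (by simp), add_sub_cancel_right]

lemma sum_pathWeight_update_right [Fintype E] (hM1 : ∀ n x, ∑ x', M n x x' = 1) {a b : ℤ}
    (h : a < b) (f : ℤ → E) : ∑ x, pathWeight M a b (update f b x) = pathWeight M a (b - 1) f := by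
  have hcongr : ∀ x, pathWeight M a (b - 1) (update f b x) = pathWeight M a (b - 1) f :=
    fun x => pathWeight_congr M fun m _ hm => update_of_ne (by omega) _ _
  simp only [pathWeight_eq_mul_right M h, hcongr, update_self,
    update_of_ne (show b - 1 ≠ b by omega), ← Finset.mul_sum, hM1, mul_one]

lemma sum_mul_pathWeight_update_left [Fintype E] {π : ℤ → E → ℝ} (hπ : IsAbsProbSeq M π)
    {a b : ℤ} (h : a < b) (ha : a + 1 ≤ 0) (f : ℤ → E) :
    ∑ x, π a x * pathWeight M a b (update f a x)
      = π (a + 1) (f (a + 1)) * pathWeight M (a + 1) b f := by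
  have hcongr : ∀ x, pathWeight M (a + 1) b (update f a x) = pathWeight M (a + 1) b f :=
    fun x => pathWeight_congr M fun m hm _ => update_of_ne (by omega) _ _
  have hstep := (hπ (a + 1) ha).2.2 (f (a + 1))
  rw [add_sub_cancel_right] at hstep
  simp only [pathWeight_eq_mul_left M h, hcongr, update_self,
    update_of_ne (show a + 1 ≠ a by omega), ← mul_assoc, ← Finset.sum_mul, hstep]

end PathWeight

section Law

variable {E : Type*} [Fintype E] [MeasurableSpace E] {M : ℤ → E → E → ℝ} {π : ℤ → E → ℝ}
  {P : Measure (ℤ → E)}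

lemma IsLawOf.measure_intervalCylinder_zero (hP : IsLawOf M π P) {a : ℤ} (ha : a ≤ 0)
    (f : ℤ → E) : P (intervalCylinder a 0 f) = ENNReal.ofReal (π a (f a) * pathWeight M a 0 f) :=
  hP a ha f

lemma sum_measure_intervalCylinder_update_zero (hπ : IsAbsProbSeq M π) (hP : IsLawOf M π P)
    (f : ℤ → E) : ∑ x, P (intervalCylinder 0 0 (update f 0 x)) = 1 := by
  have hterm : ∀ x, P (intervalCylinder 0 0 (update f 0 x)) = ENNReal.ofReal (π 0 x) := fun x => by
    rw [hP.measure_intervalCylinder_zero le_rfl, update_self, pathWeight_self, mul_one]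
  rw [Finset.sum_congr rfl fun x _ => hterm x,
    ← ENNReal.ofReal_sum_of_nonneg fun x _ => (hπ 0 le_rfl).1 x, (hπ 0 le_rfl).2.1,
    ENNReal.ofReal_one]

lemma sum_measure_intervalCylinder_update (hM0 : ∀ n x x', 0 ≤ M n x x')
    (hπ : IsAbsProbSeq M π) (hP : IsLawOf M π P) {a : ℤ} (ha : a < 0) (f : ℤ → E) :
    ∑ x, P (intervalCylinder a 0 (update f a x)) = P (intervalCylinder (a + 1) 0 f) := by
  have hterm : ∀ x, P (intervalCylinder a 0 (update f a x))
      = ENNReal.ofReal (π a x * pathWeight M a 0 (update f a x)) := fun x => by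
    rw [hP.measure_intervalCylinder_zero ha.le, update_self]
  rw [Finset.sum_congr rfl fun x _ => hterm x, ← ENNReal.ofReal_sum_of_nonneg fun x _ =>
      mul_nonneg ((hπ a ha.le).1 x) (pathWeight_nonneg M hM0 _ _ _),
    sum_mul_pathWeight_update_left M hπ ha (by omega),
    hP.measure_intervalCylinder_zero (by omega)]

-- The σ-algebra on `E` is arbitrary, so cylinders need not be measurable: `IsLawOf` only
-- prescribes their outer measures, and this bound is what makes them null-measurable.
lemma measure_add_compl_intervalCylinder_zero_le (hM0 : ∀ n x x', 0 ≤ M n x x')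
    (hπ : IsAbsProbSeq M π) (hP : IsLawOf M π P) {a : ℤ} (ha : a ≤ 0) (f : ℤ → E) :
    P (intervalCylinder a 0 f) + P (intervalCylinder a 0 f)ᶜ ≤ 1 := by
  classical
  induction a, ha using Int.leInductionDown generalizing f with
  | base =>
    refine (measure_add_compl_intervalCylinder_le P le_rfl f).trans_eq ?_
    rw [intervalCylinder_of_lt (by norm_num), compl_univ, measure_empty, zero_add,
      sum_measure_intervalCylinder_update_zero hπ hP]
  | pred n hn ih =>
    refine (measure_add_compl_intervalCylinder_le P (by omega) f).trans ?_
    rw [sum_measure_intervalCylinder_update hM0 hπ hP (by omega), sub_add_cancel, add_comm]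
    exact ih f

lemma nullMeasurableSet_intervalCylinder [IsProbabilityMeasure P]
    (hM0 : ∀ n x x', 0 ≤ M n x x') (hπ : IsAbsProbSeq M π) (hP : IsLawOf M π P) {a b : ℤ}
    (hab : a ≤ b) (hb : b ≤ 0)
    (f : ℤ → E) : NullMeasurableSet (intervalCylinder a b f) P := by
  induction b, hb using Int.leInductionDown generalizing a f with
  | base =>
    refine nullMeasurableSet_of_add_compl_le ?_
    rw [measure_univ]
    exact measure_add_compl_intervalCylinder_zero_le hM0 hπ hP hab f
  | pred n hn ih =>
    rw [← iUnion_inter_eval_eq (intervalCylinder a (n - 1) f) n]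
    refine .iUnion fun x => ?_
    rw [intervalCylinder_sub_one_inter (by omega)]
    exact ih (by omega) _

lemma measure_intervalCylinder [IsProbabilityMeasure P] (hM0 : ∀ n x x', 0 ≤ M n x x')
    (hM1 : ∀ n x, ∑ x', M n x x' = 1) (hπ : IsAbsProbSeq M π) (hP : IsLawOf M π P) {a b : ℤ}
    (hab : a ≤ b) (hb : b ≤ 0) (f : ℤ → E) :
    P (intervalCylinder a b f) = ENNReal.ofReal (π a (f a) * pathWeight M a b f) := by
  induction b, hb using Int.leInductionDown generalizing a f with
  | base => exact hP.measure_intervalCylinder_zero hab f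
  | pred n hn ih =>
    have hslice : ∀ x, intervalCylinder a (n - 1) f ∩ {ω | ω n = x}
        = intervalCylinder a n (update f n x) := intervalCylinder_sub_one_inter (by omega) f
    rw [measure_eq_sum_inter_eval _ n fun x => hslice x ▸
        nullMeasurableSet_intervalCylinder hM0 hπ hP (by omega) hn _,
      ← sum_pathWeight_update_right M hM1 (by omega), Finset.mul_sum,
      ENNReal.ofReal_sum_of_nonneg fun x _ =>
        mul_nonneg ((hπ a (by omega)).1 _) (pathWeight_nonneg M hM0 _ _ _)]
    refine Finset.sum_congr rfl fun x _ => ?_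
    rw [hslice, ih (by omega), update_of_ne (by omega)]

end Law

section Markov

variable {E : Type*} [MeasurableSpace E] {M : ℤ → E → E → ℝ} {π : ℤ → E → ℝ}
  {P Q : Measure (ℤ → E)}

def HasMarkovTransitions (M : ℤ → E → E → ℝ) (Q : Measure (ℤ → E)) : Prop :=
  ∀ a n, a < n → n ≤ 0 → ∀ f : ℤ → E, Q (intervalCylinder a n f)
    = Q (intervalCylinder a (n - 1) f) * ENNReal.ofReal (M n (f (n - 1)) (f n))

lemma measure_inter_intervalCylinder [Fintype E] [IsProbabilityMeasure P]
    (hM0 : ∀ n x x', 0 ≤ M n x x') (hM1 : ∀ n x, ∑ x', M n x x' = 1) (hπ : IsAbsProbSeq M π)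
    (hP : IsLawOf M π P) {a n : ℤ} (han : a < n) (hn : n ≤ 0) (f : ℤ → E) {B : Set (ℤ → E)}
    (hB : MeasurableSet[coordSigmaLE E (a - 1)] B) :
    P (B ∩ intervalCylinder a n f)
      = P (B ∩ intervalCylinder a (n - 1) f) * ENNReal.ofReal (M n (f (n - 1)) (f n)) := by
  set c := (M n (f (n - 1)) (f n)).toNNReal
  have hac : ∀ S, P.restrict S ≪ P := fun S =>
    Measure.absolutelyContinuous_of_le Measure.restrict_le_self
  have hnm : ∀ m ≤ a - 1, ∀ g, NullMeasurableSet (intervalCylinder m (a - 1) g) P :=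
    fun m hm g => nullMeasurableSet_intervalCylinder hM0 hπ hP hm (by omega) g
  have hcyl : ∀ m ≤ a - 1, ∀ g, P (intervalCylinder m (a - 1) g ∩ intervalCylinder a n f)
      = c * P (intervalCylinder m (a - 1) g ∩ intervalCylinder a (n - 1) f) := by
    intro m hm g
    rw [intervalCylinder_inter_intervalCylinder (by omega) (by omega),
      intervalCylinder_inter_intervalCylinder (by omega) (by omega),
      measure_intervalCylinder hM0 hM1 hπ hP (by omega) hn,
      measure_intervalCylinder hM0 hM1 hπ hP (by omega) (by omega),
      pathWeight_eq_mul_right M (show m < n by omega), ← mul_assoc,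
      ENNReal.ofReal_mul' (hM0 _ _ _), if_neg (show ¬ n - 1 < a by omega),
      if_neg (show ¬ n < a by omega), mul_comm]
    rfl
  have key := measure_eq_of_intervalCylinder_eq (μ := P.restrict (intervalCylinder a n f))
    (ν := c • P.restrict (intervalCylinder a (n - 1) f))
    (fun m hm g => (hnm m hm g).mono_ac (hac _))
    (fun m hm g => (hnm m hm g).mono_ac ((hac _).smul_left c))
    (fun m hm g => by
      rw [Measure.coe_nnreal_smul_apply, Measure.restrict_apply₀ ((hnm m hm g).mono_ac (hac _)),
        Measure.restrict_apply₀ ((hnm m hm g).mono_ac (hac _)), hcyl m hm g]) hB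
  rwa [Measure.coe_nnreal_smul_apply, Measure.restrict_apply (coordSigmaLE_le_pi _ _ hB),
    Measure.restrict_apply (coordSigmaLE_le_pi _ _ hB), mul_comm] at key

lemma hasMarkovTransitions_cond [Fintype E] [IsProbabilityMeasure P]
    (hM0 : ∀ n x x', 0 ≤ M n x x') (hM1 : ∀ n x, ∑ x', M n x x' = 1) (hπ : IsAbsProbSeq M π)
    (hP : IsLawOf M π P)    {A : Set (ℤ → E)} (hA : ∀ n, MeasurableSet[coordSigmaLE E n] A) :
    HasMarkovTransitions M P[|A] := fun a n han hn f => by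
  have hAm := coordSigmaLE_le_pi 0 A (hA 0)
  rw [cond_apply hAm, cond_apply hAm,
    measure_inter_intervalCylinder hM0 hM1 hπ hP han hn f (hA (a - 1)), mul_assoc]

namespace HasMarkovTransitions

lemma measure_intervalCylinder (hQ : HasMarkovTransitions M Q) (hM0 : ∀ n x x', 0 ≤ M n x x')
    {a b : ℤ} (hab : a ≤ b) (hb : b ≤ 0) (f : ℤ → E) :
    Q (intervalCylinder a b f) = Q {ω | ω a = f a} * ENNReal.ofReal (pathWeight M a b f) := by
  induction b, hab using Int.leInduction generalizing f with
  | base => rw [intervalCylinder_self, pathWeight_self, ENNReal.ofReal_one, mul_one]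
  | succ n han ih =>
    rw [hQ a (n + 1) (by omega) hb f, add_sub_cancel_right, ih (by omega),
      pathWeight_eq_mul_right M (show a < n + 1 by omega), add_sub_cancel_right,
      ENNReal.ofReal_mul (pathWeight_nonneg M hM0 _ _ _), mul_assoc]

lemma isAbsProbSeq [Fintype E] [IsProbabilityMeasure Q] (hQ : HasMarkovTransitions M Q)
    (hM0 : ∀ n x x', 0 ≤ M n x x')
    (hnm : ∀ a b, a ≤ b → b ≤ 0 → ∀ f, NullMeasurableSet (intervalCylinder a b f) Q) :
    IsAbsProbSeq M fun n x => (Q {ω | ω n = x}).toReal := by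
  intro n hn
  have hcoord : ∀ x, NullMeasurableSet {ω : ℤ → E | ω n = x} Q := fun x => by
    simpa [intervalCylinder_self] using hnm n n le_rfl hn fun _ => x
  refine ⟨fun x => ENNReal.toReal_nonneg, ?_, fun x => ?_⟩
  · have htotal := measure_eq_sum_inter_eval (μ := Q) univ n fun x => by
      simpa using hcoord x
    simp only [univ_inter, measure_univ] at htotal
    rw [← ENNReal.toReal_sum fun _ _ => measure_ne_top _ _, ← htotal, ENNReal.toReal_one]
  · set g : E → ℤ → E := fun z => update (fun _ => x) (n - 1) z
    have hslice : ∀ z, {ω : ℤ → E | ω n = x} ∩ {ω | ω (n - 1) = z}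
        = intervalCylinder (n - 1) n (g z) := fun z => by
      rw [← intervalCylinder_add_one_inter (by omega), sub_add_cancel, intervalCylinder_self]
    have hstep : Q {ω | ω n = x} = ∑ z, Q {ω | ω (n - 1) = z} * ENNReal.ofReal (M n z x) := by
      rw [measure_eq_sum_inter_eval _ (n - 1) fun z => hslice z ▸ hnm _ _ (by omega) hn _]
      refine Finset.sum_congr rfl fun z _ => ?_
      rw [hslice, hQ (n - 1) n (by omega) hn, intervalCylinder_self]
      simp only [g, update_self, update_of_ne (show n ≠ n - 1 by omega)]
    simp only [hstep, ENNReal.toReal_sum fun z _ => ENNReal.mul_ne_top (measure_ne_top _ _)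
      ENNReal.ofReal_ne_top, ENNReal.toReal_mul, ENNReal.toReal_ofReal (hM0 _ _ _)]

lemma measure_eq [Fintype E] [IsFiniteMeasure Q] [IsProbabilityMeasure P]
    (hQ : HasMarkovTransitions M Q) (hM0 : ∀ n x x', 0 ≤ M n x x') (hπ : IsAbsProbSeq M π)
    (hP : IsLawOf M π P)
    (hnm : ∀ m ≤ 0, ∀ f, NullMeasurableSet (intervalCylinder m 0 f) Q)
    (hmarg : ∀ n ≤ 0, ∀ x, (Q {ω | ω n = x}).toReal = π n x)
    {B : Set (ℤ → E)} (hB : MeasurableSet[coordSigmaLE E 0] B) : Q B = P B := by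
  refine measure_eq_of_intervalCylinder_eq hnm
    (fun m hm f => nullMeasurableSet_intervalCylinder hM0 hπ hP hm le_rfl f) (fun m hm f => ?_) hB
  rw [hQ.measure_intervalCylinder hM0 hm le_rfl, ← ENNReal.ofReal_toReal (measure_ne_top _ _),
    hmarg m hm, ← ENNReal.ofReal_mul ((hπ m hm).1 _)]
  exact (hP.measure_intervalCylinder_zero hm f).symm

end HasMarkovTransitions

end Markov

theorem nontrivial_tail_implies_two_absolute_probabilities_general {E : Type*} [Fintype E]
    [MeasurableSpace E]
    (M : ℤ → E → E → ℝ) (hM0 : ∀ n x x', 0 ≤ M n x x') (hM1 : ∀ n x, ∑ x', M n x x' = 1)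
    (π : ℤ → E → ℝ) (hπ : IsAbsProbSeq M π)
    (P : Measure (ℤ → E)) [IsProbabilityMeasure P] (hP : IsLawOf M π P)
    (A : Set (ℤ → E)) (hA : MeasurableSet[tailSigma E] A)
    (hA0 : 0 < P A) (hA1 : P A < 1) :
    ∃ π' : ℤ → E → ℝ, IsAbsProbSeq M π' ∧ ∃ n ≤ (0 : ℤ), π' n ≠ π n := by
  have hpast : ∀ n, MeasurableSet[coordSigmaLE E n] A := fun n => iInf_le (coordSigmaLE E) n A hA
  have := cond_isProbabilityMeasure (μ := P) hA0.ne'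
  have hnm : ∀ a b, a ≤ b → b ≤ 0 → ∀ f, NullMeasurableSet (intervalCylinder a b f) P[|A] :=
    fun a b hab hb f =>
      (nullMeasurableSet_intervalCylinder hM0 hπ hP hab hb f).mono_ac cond_absolutelyContinuous
  have hQ := hasMarkovTransitions_cond hM0 hM1 hπ hP hpast
  refine ⟨_, hQ.isAbsProbSeq hM0 hnm, ?_⟩
  by_contra! hmarg
  have hcondA := hQ.measure_eq hM0 hπ hP (fun m hm => hnm m 0 hm le_rfl)
    (fun n hn => congrFun (hmarg n hn)) (hpast 0)
  rw [cond_apply_self hA0.ne' (measure_ne_top P A)] at hcondA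
  exact hA1.ne hcondA.symm

/-- A nontrivial tail event for `P_π` yields a second, distinct sequence of
absolute probabilities. -/
theorem nontrivial_tail_implies_two_absolute_probabilities {E : Type*} [Fintype E]
    [Nonempty E] [MeasurableSpace E]
    (M : ℤ → E → E → ℝ) (hM0 : ∀ n x x', 0 ≤ M n x x') (hM1 : ∀ n x, ∑ x', M n x x' = 1)
    (π : ℤ → E → ℝ) (hπ : IsAbsProbSeq M π)
    (P : Measure (ℤ → E)) [IsProbabilityMeasure P] (hP : IsLawOf M π P)
    (A : Set (ℤ → E)) (hA : MeasurableSet[tailSigma E] A)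
    (hA0 : 0 < P A) (hA1 : P A < 1) :
    ∃ π' : ℤ → E → ℝ, IsAbsProbSeq M π' ∧ ∃ n ≤ (0 : ℤ), π' n ≠ π n :=
  nontrivial_tail_implies_two_absolute_probabilities_general M hM0 hM1 π hπ P hP A hA hA0 hA1
end

section
/- Suppose for some n < 0 and k ∈ {n+1,…,0} with k = n+1 there exist a probability distribution ν on finite E and constants 0 < ε⁻ ≤ ε⁺ such that ε⁻ν(x') ≤ M_{n,k}(x,x') ≤ ε⁺ν(x') for all x, x', and suppose φ_{n+1}(x, y_{n+1:0}) > 0 for all x and observations. Then the conditional kernel M_{n+1}^y satisfies M_{n+1}^y(x,x') ≥ (ε⁻/ε⁺) ν̃(x') for a probability distribution ν̃ on E (depending on y), and hence the Dobrushin coefficient satisfies sup_y β(M_{n,k}^y) ≤ 1 − ε⁻/ε⁺ < 1. -/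
open scoped BigOperators

/-- The backward functions `φ_n(x, y_{n:0})` of the HMM: `φ_n ≡ 1` for `n > 0` and
`φ_n(x) = ∑ x', M_n(x,x') g_n(x',y_n) φ_{n+1}(x')` for `n ≤ 0`. -/
noncomputable def phiB {E F : Type*} [Fintype E] (M : ℤ → E → E → ℝ)
    (g : ℤ → E → F → ℝ) (y : ℤ → F) (n : ℤ) (x : E) : ℝ :=
  if _h : n ≤ 0 then ∑ x', M n x x' * g n x' (y n) * phiB M g y (n + 1) x'
  else 1
termination_by (1 - n).toNat
decreasing_by omega

/-- Dobrushin coefficient as the maximal total variation distance between rows. -/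
noncomputable def dobrushin {E : Type*} [Fintype E] (K : E → E → ℝ) : ℝ :=
  ⨆ p : E × E, (1 / 2) * ∑ z, |K p.1 z - K p.2 z|

/-!
Conditioned on the future observations, `M_{n+1}^y` is the Doob `h`-transform of `M_{n+1}` by
`h(x') = g_{n+1}(x', y_{n+1}) φ_{n+2}(x')`, and its normalizer is `φ_{n+1}(x) = ∑ M_{n+1}(x,·) h`.
The sandwich `ε⁻ν ≤ M_{n+1}(x,·) ≤ ε⁺ν` bounds the numerator below by `ε⁻ ν h` and the normalizer
above by `ε⁺ ∑ ν h`, so every row dominates `(ε⁻/ε⁺) ν̃` with `ν̃ ∝ ν h`. Two rows of a stochastic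
kernel that both dominate `c ν̃` share mass at least `c`, hence lie within total variation `1 - c`.
-/

open Finset

theorem phiB_nonneg {E F : Type*} [Fintype E] (M : ℤ → E → E → ℝ)
    (hM0 : ∀ n x x', 0 ≤ M n x x') (g : ℤ → E → F → ℝ) (hg0 : ∀ n x y, 0 ≤ g n x y)
    (y : ℤ → F) (n : ℤ) (x : E) : 0 ≤ phiB M g y n x := by
  rw [phiB]
  split
  · exact sum_nonneg fun x' _ =>
      mul_nonneg (mul_nonneg (hM0 _ _ _) (hg0 _ _ _)) (phiB_nonneg M hM0 g hg0 y (n + 1) x')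
  · exact zero_le_one
termination_by (1 - n).toNat
decreasing_by omega

theorem phiB_of_nonpos {E F : Type*} [Fintype E] (M : ℤ → E → E → ℝ) (g : ℤ → E → F → ℝ)
    (y : ℤ → F) {n : ℤ} (hn : n ≤ 0) (x : E) :
    phiB M g y n x = ∑ x', M n x x' * (g n x' (y n) * phiB M g y (n + 1) x') := by
  rw [phiB, dif_pos hn]
  simp only [mul_assoc]

section Kernels

variable {E : Type*} [Fintype E]

theorem abs_sub_eq_add_sub_two_mul_min {α : Type*} [CommRing α] [LinearOrder α]
    [IsOrderedRing α] (a b : α) : |a - b| = a + b - 2 * min a b := by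
  rw [← max_sub_min_eq_abs', ← min_add_max a b]
  ring

theorem dobrushin_le_one_sub_of_minorized [Nonempty E] {K : E → E → ℝ} {ν : E → ℝ} {c : ℝ}
    (hK1 : ∀ x, ∑ z, K x z = 1) (hν1 : ∑ z, ν z = 1) (hmin : ∀ x z, c * ν z ≤ K x z) :
    dobrushin K ≤ 1 - c := by
  refine ciSup_le fun ⟨x₁, x₂⟩ => ?_
  have hoverlap : c ≤ ∑ z, min (K x₁ z) (K x₂ z) :=
    calc c = ∑ z, c * ν z := by rw [← mul_sum, hν1, mul_one]
      _ ≤ ∑ z, min (K x₁ z) (K x₂ z) := sum_le_sum fun z _ => le_min (hmin x₁ z) (hmin x₂ z)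
  have htv : ∑ z, |K x₁ z - K x₂ z| = 2 - 2 * ∑ z, min (K x₁ z) (K x₂ z) := by
    simp only [abs_sub_eq_add_sub_two_mul_min, sum_sub_distrib, sum_add_distrib, hK1, ← mul_sum]
    ring
  dsimp only
  rw [htv]
  linarith

noncomputable def hTransform (P : E → E → ℝ) (h : E → ℝ) (x z : E) : ℝ :=
  P x z * h z / ∑ w, P x w * h w

noncomputable def tilt (ν h : E → ℝ) (z : E) : ℝ :=
  ν z * h z / ∑ w, ν w * h w

theorem sum_hTransform {P : E → E → ℝ} {h : E → ℝ} {x : E} (hpos : 0 < ∑ w, P x w * h w) :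
    ∑ z, hTransform P h x z = 1 := by
  simp only [hTransform, ← sum_div, div_self hpos.ne']

theorem tilt_nonneg {ν h : E → ℝ} (hν : ∀ z, 0 ≤ ν z) (hh : ∀ z, 0 ≤ h z) (z : E) :
    0 ≤ tilt ν h z :=
  div_nonneg (mul_nonneg (hν z) (hh z)) (sum_nonneg fun w _ => mul_nonneg (hν w) (hh w))

theorem sum_tilt {ν h : E → ℝ} (hpos : 0 < ∑ w, ν w * h w) : ∑ z, tilt ν h z = 1 := by
  simp only [tilt, ← sum_div, div_self hpos.ne']

theorem sum_mul_le_mul_sum_of_le {P : E → E → ℝ} {ν h : E → ℝ} {εp : ℝ} (hh : ∀ z, 0 ≤ h z)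
    (hupp : ∀ x z, P x z ≤ εp * ν z) (x : E) :
    ∑ w, P x w * h w ≤ εp * ∑ w, ν w * h w := by
  rw [mul_sum]
  exact sum_le_sum fun w _ => by
    rw [← mul_assoc]
    exact mul_le_mul_of_nonneg_right (hupp x w) (hh w)

theorem sum_mul_pos_of_le [Nonempty E] {P : E → E → ℝ} {ν h : E → ℝ} {εp : ℝ}
    (hν : ∀ z, 0 ≤ ν z) (hh : ∀ z, 0 ≤ h z) (hupp : ∀ x z, P x z ≤ εp * ν z)
    (hpos : ∀ x, 0 < ∑ w, P x w * h w) : 0 < ∑ w, ν w * h w := by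
  obtain ⟨x⟩ := ‹Nonempty E›
  refine (sum_nonneg fun w _ => mul_nonneg (hν w) (hh w)).lt_of_ne fun hzero => ?_
  have := (hpos x).trans_le (sum_mul_le_mul_sum_of_le hh hupp x)
  rw [← hzero, mul_zero] at this
  exact this.false

theorem tilt_le_hTransform {P : E → E → ℝ} {ν h : E → ℝ} {εm εp : ℝ}
    (hP : ∀ x z, 0 ≤ P x z) (hh : ∀ z, 0 ≤ h z)
    (hlow : ∀ x z, εm * ν z ≤ P x z) (hupp : ∀ x z, P x z ≤ εp * ν z)
    (hpos : ∀ x, 0 < ∑ w, P x w * h w) (x z : E) :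
    εm / εp * tilt ν h z ≤ hTransform P h x z := by
  rw [tilt, hTransform, div_mul_div_comm, ← mul_assoc]
  exact div_le_div₀ (mul_nonneg (hP x z) (hh z)) (mul_le_mul_of_nonneg_right (hlow x z) (hh z))
    (hpos x) (sum_mul_le_mul_sum_of_le hh hupp x)

end Kernels

theorem smoothing_kernel_dobrushin_bound_general {E F : Type*} [Fintype E] [Nonempty E]
    (M : ℤ → E → E → ℝ) (hM0 : ∀ n x x', 0 ≤ M n x x')
    (g : ℤ → E → F → ℝ) (hg0 : ∀ n x y, 0 ≤ g n x y)
    (n : ℤ) (hn : n < 0)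
    (ν : E → ℝ) (hν0 : ∀ x, 0 ≤ ν x)
    (εm εp : ℝ) (hεm : 0 < εm) (hεmp : εm ≤ εp)
    (hlow : ∀ x x', εm * ν x' ≤ M (n + 1) x x')
    (hupp : ∀ x x', M (n + 1) x x' ≤ εp * ν x')
    (hφ : ∀ (y : ℤ → F) (x : E), 0 < phiB M g y (n + 1) x) :
    (∀ y : ℤ → F,
      (∃ ν' : E → ℝ, (∀ x', 0 ≤ ν' x') ∧ (∑ x', ν' x' = 1) ∧
        ∀ x x', εm / εp * ν' x'
          ≤ M (n + 1) x x' * g (n + 1) x' (y (n + 1)) * phiB M g y (n + 2) x'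
              / phiB M g y (n + 1) x) ∧
      dobrushin (fun x x' =>
          M (n + 1) x x' * g (n + 1) x' (y (n + 1)) * phiB M g y (n + 2) x'
            / phiB M g y (n + 1) x) ≤ 1 - εm / εp)
    ∧ 1 - εm / εp < 1 := by
  refine ⟨fun y => ?_, sub_lt_self 1 (div_pos hεm (hεm.trans_le hεmp))⟩
  set h : E → ℝ := fun x' => g (n + 1) x' (y (n + 1)) * phiB M g y (n + 2) x'
  have hh : ∀ x', 0 ≤ h x' := fun x' => mul_nonneg (hg0 _ _ _) (phiB_nonneg M hM0 g hg0 y _ x')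
  have hφ_eq : ∀ x, phiB M g y (n + 1) x = ∑ x', M (n + 1) x x' * h x' := fun x => by
    rw [phiB_of_nonpos M g y (by omega : n + 1 ≤ 0), show n + 1 + 1 = n + 2 by ring]
  have hkernel : ∀ x x', M (n + 1) x x' * g (n + 1) x' (y (n + 1)) * phiB M g y (n + 2) x'
      / phiB M g y (n + 1) x = hTransform (M (n + 1)) h x x' := fun x x' => by
    rw [hTransform, ← hφ_eq, mul_assoc]
  have hpos : ∀ x, 0 < ∑ x', M (n + 1) x x' * h x' := fun x => hφ_eq x ▸ hφ y x
  have hminor := tilt_le_hTransform (hM0 (n + 1)) hh hlow hupp hpos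
  have htilt := sum_tilt (sum_mul_pos_of_le hν0 hh hupp hpos)
  simp only [hkernel]
  exact ⟨⟨tilt ν h, tilt_nonneg hν0 hh, htilt, hminor⟩,
    dobrushin_le_one_sub_of_minorized (fun x => sum_hTransform (hpos x)) htilt hminor⟩

/-- One-step mixing for the conditional kernels: if `ε⁻ ν ≤ M_{n+1}(x,·) ≤ ε⁺ ν`
and `φ_{n+1} > 0`, then uniformly in the observation sequence `y`, the conditional
kernel `M_{n+1}^y` is minorized by `(ε⁻/ε⁺) ν̃` for some probability `ν̃`, whence
`β(M_{n+1}^y) ≤ 1 − ε⁻/ε⁺ < 1`. -/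
theorem smoothing_kernel_dobrushin_bound {E F : Type*} [Fintype E] [Nonempty E]
    (M : ℤ → E → E → ℝ) (hM0 : ∀ n x x', 0 ≤ M n x x') (hM1 : ∀ n x, ∑ x', M n x x' = 1)
    (g : ℤ → E → F → ℝ) (hg0 : ∀ n x y, 0 ≤ g n x y)
    (n : ℤ) (hn : n < 0)
    (ν : E → ℝ) (hν0 : ∀ x, 0 ≤ ν x) (hν1 : ∑ x, ν x = 1)
    (εm εp : ℝ) (hεm : 0 < εm) (hεmp : εm ≤ εp)
    (hlow : ∀ x x', εm * ν x' ≤ M (n + 1) x x')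
    (hupp : ∀ x x', M (n + 1) x x' ≤ εp * ν x')
    (hφ : ∀ (y : ℤ → F) (x : E), 0 < phiB M g y (n + 1) x) :
    (∀ y : ℤ → F,
      (∃ ν' : E → ℝ, (∀ x', 0 ≤ ν' x') ∧ (∑ x', ν' x' = 1) ∧
        ∀ x x', εm / εp * ν' x'
          ≤ M (n + 1) x x' * g (n + 1) x' (y (n + 1)) * phiB M g y (n + 2) x'
              / phiB M g y (n + 1) x) ∧
      dobrushin (fun x x' =>
          M (n + 1) x x' * g (n + 1) x' (y (n + 1)) * phiB M g y (n + 2) x'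
            / phiB M g y (n + 1) x) ≤ 1 - εm / εp)
    ∧ 1 - εm / εp < 1 :=
  smoothing_kernel_dobrushin_bound_general M hM0 g hg0 n hn ν hν0 εm εp hεm hεmp hlow hupp hφ
end
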